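/- There exist constants C > 0 and δ > 0 such that for every w = (w₁, w₂) ∈ M with w₁ ≠ 0, w₂ ≠ 0 and dist(w, S) < δ: ‖θ₁w₁ − θ₂w₂‖ ≤ C · dist²(w, S). (Since on M near S the gradient of f is ∇f(w) = (1/(2π))(θ₁w₁ − θ₂w₂, θ₂w₂ − θ₁w₁), this says ‖∇f(w)‖ = O(dist²(w, S)) on M near S.) -/

import Mathlib

open scoped RealInnerProductSpace
open InnerProductGeometry

/-- Closed form of the population loss for learning a single ReLU neuron with two
student neurons under Gaussian inputs. -/
noncomputable def nnLoss {d : ℕ} (v : EuclideanSpace ℝ (Fin d))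
    (w : EuclideanSpace ℝ (Fin d) × EuclideanSpace ℝ (Fin d)) : ℝ :=
  (1 / 4) * ‖w.1 + w.2 - v‖ ^ 2 +
    (1 / (2 * Real.pi)) *
      ((Real.sin (angle w.1 w.2) - angle w.1 w.2 * Real.cos (angle w.1 w.2)) *
          ‖w.1‖ * ‖w.2‖ -
        ((Real.sin (angle w.1 v) - angle w.1 v * Real.cos (angle w.1 v)) * ‖w.1‖ * ‖v‖ +
          (Real.sin (angle w.2 v) - angle w.2 v * Real.cos (angle w.2 v)) * ‖w.2‖ * ‖v‖))

/-- The affine subspace (ravine) `M = {(w₁, w₂) : w₁ + w₂ = v}`. -/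
def nnRavine {d : ℕ} (v : EuclideanSpace ℝ (Fin d)) :
    Set (EuclideanSpace ℝ (Fin d) × EuclideanSpace ℝ (Fin d)) :=
  {w | w.1 + w.2 = v}

/-- The set of minimizers `S`. -/
def nnSol {d : ℕ} (v : EuclideanSpace ℝ (Fin d)) :
    Set (EuclideanSpace ℝ (Fin d) × EuclideanSpace ℝ (Fin d)) :=
  {w | w.1 + w.2 = v ∧ ⟪w.1, v⟫ = ‖w.1‖ * ‖v‖ ∧ ⟪w.2, v⟫ = ‖w.2‖ * ‖v‖ ∧
    ‖v‖ / 8 ≤ ‖w.1‖ ∧ ‖w.1‖ ≤ 2 * ‖v‖ ∧ ‖v‖ / 8 ≤ ‖w.2‖ ∧ ‖w.2‖ ≤ 2 * ‖v‖}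

/-- Euclidean distance on `ℝ^d × ℝ^d`. -/
noncomputable def nnDist {d : ℕ}
    (w w' : EuclideanSpace ℝ (Fin d) × EuclideanSpace ℝ (Fin d)) : ℝ :=
  Real.sqrt (‖w.1 - w'.1‖ ^ 2 + ‖w.2 - w'.2‖ ^ 2)

/-- Euclidean distance from `w` to the solution set `S`. -/
noncomputable def nnDistSol {d : ℕ} (v : EuclideanSpace ℝ (Fin d))
    (w : EuclideanSpace ℝ (Fin d) × EuclideanSpace ℝ (Fin d)) : ℝ :=
  sInf (nnDist w '' nnSol v)

/-!
Write `w = (t • v + p, (1 - t) • v - p)` with `p ⊥ v`. Then `θ₁ = arctan (‖p‖ / (t‖v‖))` and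
`θ₂ = arctan (‖p‖ / ((1 - t)‖v‖))`, and
`θ₁ w₁ - θ₂ w₂ = (θ₁ t - θ₂ (1 - t)) • v + (θ₁ + θ₂) • p`.
Since `x - x³/3 ≤ arctan x ≤ x`, both `θ₁ t ‖v‖` and `θ₂ (1 - t) ‖v‖` equal `‖p‖ + O(‖p‖²)`, so
their first-order terms cancel, and `θᵢ = O(‖p‖)`; hence the vector is `O(‖p‖²)`.
Points of `S` are pairs of nonnegative multiples of `v`, so `dist(w, S)² ≥ 2‖p‖²`, and being
close to `S` keeps `t‖v‖` and `(1 - t)‖v‖` above `‖v‖/16`, which makes the constants uniform.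
-/

namespace Real

theorem arctan_le_self {x : ℝ} (hx : 0 ≤ x) : arctan x ≤ x := by
  simpa only [tan_arctan] using le_tan (arctan_nonneg.2 hx) (arctan_lt_pi_div_two x)

theorem sub_pow_three_div_three_le_arctan {x : ℝ} (hx : 0 ≤ x) : x - x ^ 3 / 3 ≤ arctan x := by
  have hg : ∀ y : ℝ, HasDerivAt (fun y => arctan y - y + y ^ 3 / 3) (y ^ 4 / (1 + y ^ 2)) y := by
    intro y
    refine (((hasDerivAt_arctan y).sub (hasDerivAt_id' y)).add
      ((hasDerivAt_pow 3 y).div_const 3)).congr_deriv ?_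
    field_simp
    ring
  have hmono : Monotone fun y => arctan y - y + y ^ 3 / 3 :=
    monotone_of_deriv_nonneg (fun y => (hg y).differentiableAt)
      (fun y => (hg y).deriv ▸ by positivity)
  have := hmono hx
  simp only [arctan_zero] at this
  linarith

theorem arctan_div_mul_le {q a : ℝ} (hq : 0 ≤ q) (ha : 0 < a) : arctan (q / a) * a ≤ q := by
  simpa only [div_mul_cancel₀ q ha.ne'] using
    mul_le_mul_of_nonneg_right (arctan_le_self (div_nonneg hq ha.le)) ha.le

theorem sub_sq_div_le_arctan_div_mul {q a m : ℝ} (hm : 0 < m) (hma : m ≤ a) (hq : 0 ≤ q)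
    (hqm : q ≤ m) : q - q ^ 2 / (3 * m) ≤ arctan (q / a) * a := by
  have ha : 0 < a := hm.trans_le hma
  have h := mul_le_mul_of_nonneg_right (sub_pow_three_div_three_le_arctan (div_nonneg hq ha.le))
    ha.le
  have hcube : q ^ 3 / (3 * a ^ 2) ≤ q ^ 2 / (3 * m) := by
    rw [div_le_div_iff₀ (by positivity) (by positivity)]
    have : q * m ≤ a ^ 2 := by nlinarith
    nlinarith [sq_nonneg q]
  calc q - q ^ 2 / (3 * m) ≤ q - q ^ 3 / (3 * a ^ 2) := by linarith
    _ = (q / a - (q / a) ^ 3 / 3) * a := by field_simp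
    _ ≤ arctan (q / a) * a := h

theorem abs_arctan_div_mul_sub_add_le {q a b m : ℝ} (hm : 0 < m) (hma : m ≤ a) (hmb : m ≤ b)
    (hq : 0 ≤ q) (hqm : q ≤ m) :
    |arctan (q / a) * a - arctan (q / b) * b| + (arctan (q / a) + arctan (q / b)) * q ≤
      3 / m * q ^ 2 := by
  have hθ (c : ℝ) (hmc : m ≤ c) : arctan (q / c) ≤ q / m :=
    (arctan_le_self (div_nonneg hq (hm.le.trans hmc))).trans
      (div_le_div_of_nonneg_left hq hm hmc)
  have ha := arctan_div_mul_le hq (hm.trans_le hma)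
  have hb := arctan_div_mul_le hq (hm.trans_le hmb)
  have ha' := sub_sq_div_le_arctan_div_mul hm hma hq hqm
  have hb' := sub_sq_div_le_arctan_div_mul hm hmb hq hqm
  have hdiff : |arctan (q / a) * a - arctan (q / b) * b| ≤ q ^ 2 / (3 * m) :=
    abs_sub_le_iff.2 ⟨by linarith, by linarith⟩
  have hsum : (arctan (q / a) + arctan (q / b)) * q ≤ 2 * (q / m) * q :=
    mul_le_mul_of_nonneg_right (by linarith [hθ a hma, hθ b hmb]) hq
  have hr : q ^ 2 / (3 * m) + 2 * (q / m) * q ≤ 3 / m * q ^ 2 := by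
    field_simp
    nlinarith [sq_nonneg q]
  linarith

end Real

section InnerProductSpace

variable {E : Type*} [NormedAddCommGroup E] [InnerProductSpace ℝ E]

theorem norm_smul_add_sq_of_inner_eq_zero {v p : E} (hp : ⟪p, v⟫ = 0) (a : ℝ) :
    ‖a • v + p‖ ^ 2 = (a * ‖v‖) ^ 2 + ‖p‖ ^ 2 := by
  rw [norm_add_sq_real, real_inner_smul_left, real_inner_comm, hp, norm_smul, Real.norm_eq_abs,
    mul_pow, mul_pow, sq_abs]
  ring

theorem angle_smul_add_of_inner_eq_zero {v p : E} (hv : v ≠ 0) (hp : ⟪p, v⟫ = 0) {t : ℝ}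
    (ht : 0 < t) : angle (t • v + p) v = Real.arctan (‖p‖ / (t * ‖v‖)) := by
  have h : ⟪t • v, p⟫ = 0 := by rw [real_inner_smul_left, real_inner_comm, hp, mul_zero]
  rw [angle_comm, ← angle_smul_left_of_pos v _ ht,
    angle_add_eq_arctan_of_inner_eq_zero h (smul_ne_zero ht.ne' hv), norm_smul,
    Real.norm_of_nonneg ht.le]

theorem eq_div_norm_smul_of_inner_eq_norm_mul {s v : E} (hv : v ≠ 0)
    (hs : ⟪s, v⟫ = ‖s‖ * ‖v‖) : s = (‖s‖ / ‖v‖) • v := by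
  rw [div_eq_inv_mul, mul_smul, ← inner_eq_norm_mul_iff_real.1 hs,
    inv_smul_smul₀ (norm_ne_zero_iff.2 hv)]

theorem norm_smul_add_sub_sq_of_inner_eq_norm_mul {v p s : E} (hv : v ≠ 0) (hp : ⟪p, v⟫ = 0)
    (hs : ⟪s, v⟫ = ‖s‖ * ‖v‖) (t : ℝ) :
    ‖t • v + p - s‖ ^ 2 = (t * ‖v‖ - ‖s‖) ^ 2 + ‖p‖ ^ 2 := by
  have hN : ‖v‖ ≠ 0 := norm_ne_zero_iff.2 hv
  have h : t • v + p - s = (t - ‖s‖ / ‖v‖) • v + p := by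
    conv_lhs => rw [eq_div_norm_smul_of_inner_eq_norm_mul hv hs]
    module
  rw [h, norm_smul_add_sq_of_inner_eq_zero hp, sub_mul, div_mul_cancel₀ _ hN]

theorem exists_eq_smul_add_of_inner_eq_zero {v : E} (hv : v ≠ 0) (u : E) :
    ∃ (t : ℝ) (p : E), ⟪p, v⟫ = 0 ∧ u = t • v + p := by
  refine ⟨⟪u, v⟫ / ‖v‖ ^ 2, u - (⟪u, v⟫ / ‖v‖ ^ 2) • v, ?_, by abel⟩
  rw [inner_sub_left, real_inner_smul_left, real_inner_self_eq_norm_sq,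
    div_mul_cancel₀ _ (pow_ne_zero 2 (norm_ne_zero_iff.2 hv)), sub_self]

theorem norm_smul_sub_smul_le (v p : E) (t : ℝ) {θ₁ θ₂ : ℝ} (h₁ : 0 ≤ θ₁) (h₂ : 0 ≤ θ₂) :
    ‖θ₁ • (t • v + p) - θ₂ • ((1 - t) • v - p)‖ ≤
      |θ₁ * (t * ‖v‖) - θ₂ * ((1 - t) * ‖v‖)| + (θ₁ + θ₂) * ‖p‖ := by
  have h : θ₁ • (t • v + p) - θ₂ • ((1 - t) • v - p) =
      (θ₁ * t - θ₂ * (1 - t)) • v + (θ₁ + θ₂) • p := by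
    module
  rw [h]
  refine (norm_add_le _ _).trans_eq ?_
  rw [norm_smul, norm_smul, Real.norm_eq_abs, Real.norm_eq_abs, abs_of_nonneg (add_nonneg h₁ h₂),
    ← abs_norm v, ← abs_mul, abs_norm]
  ring_nf

theorem norm_angle_smul_sub_angle_smul_le {v p : E} (hv : v ≠ 0) (hp : ⟪p, v⟫ = 0) {t m : ℝ}
    (hm : 0 < m) (hmt : m ≤ t * ‖v‖) (hmt' : m ≤ (1 - t) * ‖v‖) (hpm : ‖p‖ ≤ m) :
    ‖angle (t • v + p) v • (t • v + p) - angle ((1 - t) • v - p) v • ((1 - t) • v - p)‖ ≤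
      3 / m * ‖p‖ ^ 2 := by
  have hN : 0 ≤ ‖v‖ := norm_nonneg v
  have hθ₂ : angle ((1 - t) • v - p) v = Real.arctan (‖p‖ / ((1 - t) * ‖v‖)) := by
    rw [sub_eq_add_neg, angle_smul_add_of_inner_eq_zero hv (by rw [inner_neg_left, hp, neg_zero])
      (pos_of_mul_pos_left (hm.trans_le hmt') hN), norm_neg]
  refine (norm_smul_sub_smul_le v p t (angle_nonneg _ _) (angle_nonneg _ _)).trans ?_
  rw [angle_smul_add_of_inner_eq_zero hv hp (pos_of_mul_pos_left (hm.trans_le hmt) hN), hθ₂]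
  exact Real.abs_arctan_div_mul_sub_add_le hm hmt hmt' (norm_nonneg p) hpm

end InnerProductSpace

section Ravine

variable {d : ℕ}

theorem nnSol_nonempty (v : EuclideanSpace ℝ (Fin d)) : (nnSol v).Nonempty := by
  have hnorm : ‖(2 : ℝ)⁻¹ • v‖ = 2⁻¹ * ‖v‖ := by
    rw [norm_smul, Real.norm_of_nonneg (by norm_num)]
  have hinner : ⟪(2 : ℝ)⁻¹ • v, v⟫ = ‖(2 : ℝ)⁻¹ • v‖ * ‖v‖ := by
    rw [real_inner_smul_left, real_inner_self_eq_norm_sq, hnorm, sq, mul_assoc]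
  have hN := norm_nonneg v
  exact ⟨((2 : ℝ)⁻¹ • v, (2 : ℝ)⁻¹ • v), by rw [← add_smul]; norm_num, hinner, hinner,
    by rw [hnorm]; linarith, by rw [hnorm]; linarith, by rw [hnorm]; linarith,
    by rw [hnorm]; linarith⟩

theorem exists_eq_smul_add_of_mem_nnRavine {v : EuclideanSpace ℝ (Fin d)} (hv : v ≠ 0)
    {w : EuclideanSpace ℝ (Fin d) × EuclideanSpace ℝ (Fin d)} (hw : w ∈ nnRavine v) :
    ∃ (t : ℝ) (p : EuclideanSpace ℝ (Fin d)), ⟪p, v⟫ = 0 ∧ w = (t • v + p, (1 - t) • v - p) := by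
  obtain ⟨t, p, hp, h₁⟩ := exists_eq_smul_add_of_inner_eq_zero hv w.1
  refine ⟨t, p, hp, Prod.ext h₁ ?_⟩
  have h₂ : w.2 = v - w.1 := eq_sub_of_add_eq' hw
  rw [h₂, h₁]
  module

theorem le_nnDist_of_sq_le {w s : EuclideanSpace ℝ (Fin d) × EuclideanSpace ℝ (Fin d)} {x : ℝ}
    (h : x ^ 2 ≤ ‖w.1 - s.1‖ ^ 2 + ‖w.2 - s.2‖ ^ 2) : x ≤ nnDist w s :=
  (le_abs_self x).trans (Real.abs_le_sqrt h)

variable {v p : EuclideanSpace ℝ (Fin d)} {s : EuclideanSpace ℝ (Fin d) × EuclideanSpace ℝ (Fin d)}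

theorem sqrt_two_mul_norm_le_nnDist (hv : v ≠ 0) (hp : ⟪p, v⟫ = 0) (hs : s ∈ nnSol v) (t : ℝ) :
    √2 * ‖p‖ ≤ nnDist (t • v + p, (1 - t) • v - p) s := by
  obtain ⟨-, hs₁, hs₂, -⟩ := hs
  have hp' : ⟪-p, v⟫ = 0 := by rw [inner_neg_left, hp, neg_zero]
  apply le_nnDist_of_sq_le
  rw [mul_pow, Real.sq_sqrt zero_le_two, norm_smul_add_sub_sq_of_inner_eq_norm_mul hv hp hs₁,
    sub_eq_add_neg _ p, norm_smul_add_sub_sq_of_inner_eq_norm_mul hv hp' hs₂, norm_neg]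
  nlinarith

theorem norm_div_eight_le_add_nnDist (hv : v ≠ 0) (hp : ⟪p, v⟫ = 0) (hs : s ∈ nnSol v)
    (t : ℝ) : ‖v‖ / 8 ≤ t * ‖v‖ + nnDist (t • v + p, (1 - t) • v - p) s ∧
      ‖v‖ / 8 ≤ (1 - t) * ‖v‖ + nnDist (t • v + p, (1 - t) • v - p) s := by
  obtain ⟨-, hs₁, hs₂, h₁, -, h₂, -⟩ := hs
  have hp' : ⟪-p, v⟫ = 0 := by rw [inner_neg_left, hp, neg_zero]
  have e₁ := norm_smul_add_sub_sq_of_inner_eq_norm_mul hv hp hs₁ t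
  have e₂ := norm_smul_add_sub_sq_of_inner_eq_norm_mul hv hp' hs₂ (1 - t)
  rw [← sub_eq_add_neg, norm_neg] at e₂
  have d₁ : ‖s.1‖ - t * ‖v‖ ≤ nnDist (t • v + p, (1 - t) • v - p) s :=
    le_nnDist_of_sq_le <| by
      rw [e₁]; nlinarith [sq_nonneg ‖p‖, sq_nonneg ‖(1 - t) • v - p - s.2‖]
  have d₂ : ‖s.2‖ - (1 - t) * ‖v‖ ≤ nnDist (t • v + p, (1 - t) • v - p) s :=
    le_nnDist_of_sq_le <| by
      rw [e₂]; nlinarith [sq_nonneg ‖p‖, sq_nonneg ‖t • v + p - s.1‖]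
  constructor <;> linarith

end Ravine

theorem nn_gradient_size_on_ravine_general (d : ℕ)
    (v : EuclideanSpace ℝ (Fin d)) (hv : v ≠ 0) :
    ∃ C > (0 : ℝ), ∃ δ > (0 : ℝ),
      ∀ w : EuclideanSpace ℝ (Fin d) × EuclideanSpace ℝ (Fin d),
        w ∈ nnRavine v → w.1 ≠ 0 → w.2 ≠ 0 → nnDistSol v w < δ →
        ‖(angle w.1 v) • w.1 - (angle w.2 v) • w.2‖ ≤ C * nnDistSol v w ^ 2 := by
  have hN : 0 < ‖v‖ := norm_pos_iff.2 hv
  refine ⟨24 / ‖v‖, by positivity, ‖v‖ / 16, by positivity, ?_⟩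
  intro w hw _ _ hδ
  obtain ⟨t, p, hp, rfl⟩ := exists_eq_smul_add_of_mem_nnRavine hv hw
  set w := (t • v + p, (1 - t) • v - p)
  have hne := (nnSol_nonempty v).image (nnDist w)
  have hpD : √2 * ‖p‖ ≤ nnDistSol v w :=
    le_csInf hne (by rintro _ ⟨s, hs, rfl⟩; exact sqrt_two_mul_norm_le_nnDist hv hp hs t)
  obtain ⟨_, ⟨s, hs, rfl⟩, hsδ⟩ := exists_lt_of_csInf_lt hne hδ
  obtain ⟨h₁, h₂⟩ := norm_div_eight_le_add_nnDist hv hp hs t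
  have hp2 : 2 * ‖p‖ ^ 2 ≤ nnDistSol v w ^ 2 := by
    simpa only [mul_pow, Real.sq_sqrt zero_le_two] using pow_le_pow_left₀ (by positivity) hpD 2
  have hpm : ‖p‖ ≤ ‖v‖ / 16 := by
    have := le_mul_of_one_le_left (norm_nonneg p) (Real.one_le_sqrt.2 one_le_two)
    linarith
  calc _ ≤ 3 / (‖v‖ / 16) * ‖p‖ ^ 2 :=
        norm_angle_smul_sub_angle_smul_le hv hp (by positivity) (by linarith) (by linarith) hpm
    _ = 24 / ‖v‖ * (2 * ‖p‖ ^ 2) := by field_simp; ring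
    _ ≤ 24 / ‖v‖ * nnDistSol v w ^ 2 := by gcongr

/-- **Gradient size bound on the ravine.**
There are `C > 0` and `δ > 0` such that for every `w = (w₁, w₂) ∈ M` with `w₁ ≠ 0`,
`w₂ ≠ 0` and `dist(w, S) < δ`:  `‖θ₁w₁ − θ₂w₂‖ ≤ C · dist²(w, S)`; since on `M` near
`S` the gradient is `(1/2π)(θ₁w₁ − θ₂w₂, θ₂w₂ − θ₁w₁)`, this says
`‖∇f(w)‖ = O(dist²(w, S))`. -/
theorem nn_gradient_size_on_ravine (d : ℕ) (hd : 1 ≤ d)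
    (v : EuclideanSpace ℝ (Fin d)) (hv : v ≠ 0) :
    ∃ C > (0 : ℝ), ∃ δ > (0 : ℝ),
      ∀ w : EuclideanSpace ℝ (Fin d) × EuclideanSpace ℝ (Fin d),
        w ∈ nnRavine v → w.1 ≠ 0 → w.2 ≠ 0 → nnDistSol v w < δ →
        ‖(angle w.1 v) • w.1 - (angle w.2 v) • w.2‖ ≤ C * nnDistSol v w ^ 2 :=
  nn_gradient_size_on_ravine_general d v hv
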